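/- arXiv:1607.08399 — 5 statements merged into one kernel-verified Lean document; each statement's English description precedes it below -/
import Mathlib

section
/- Let p ≥ q ≥ 1, p ≥ 2 be natural numbers and let L be the equation px + qy = z. For n sufficiently large, the maximum size of an L-free subset of [n] equals n − ⌊n/(p+q)⌋. -/
/-- Auxiliary lemma: the statement with `m` a free variable satisfying
`(p+q)*m ≤ n < (p+q)*m + (p+q)`, i.e. `m = n / (p+q)`. -/
lemma stmt1_aux (p q n m : ℕ) (hq : 1 ≤ q) (hpq : q ≤ p) (hp : 2 ≤ p)
    (hm1 : (p + q) * m ≤ n) (hm2 : n < (p + q) * m + (p + q)) :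
    IsGreatest {k : ℕ | ∃ S : Finset ℕ, S ⊆ Finset.Icc 1 n ∧
        (¬ ∃ x ∈ S, ∃ y ∈ S, ∃ z ∈ S, p * x + q * y = z) ∧ S.card = k}
      (n - m) := by
  constructor
  · -- membership: the interval (m, n] is L-free with the right size
    refine ⟨Finset.Icc (m + 1) n, Finset.Icc_subset_Icc (by omega) le_rfl, ?_, ?_⟩
    · rintro ⟨x, hx, y, hy, z, hz, heq⟩
      simp only [Finset.mem_Icc] at hx hy hz
      have h1 : p * (m + 1) ≤ p * x := Nat.mul_le_mul_left _ hx.1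
      have h2 : q * (m + 1) ≤ q * y := Nat.mul_le_mul_left _ hy.1
      have h3 : (p + q) * (m + 1) = (p + q) * m + (p + q) := by ring
      have h4 : (p + q) * (m + 1) ≤ z := by
        rw [← heq, add_mul]; exact add_le_add h1 h2
      have := hz.2
      linarith
    · rw [Nat.card_Icc]; omega
  · -- upper bound
    rintro k ⟨S, hsub, hfree, hcard⟩
    by_contra hk
    push_neg at hk
    have hkn : k ≤ n := by
      have h := Finset.card_le_card hsub
      rw [hcard, Nat.card_Icc] at h; omega
    have hne : S.Nonempty := Finset.card_pos.mp (by omega)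
    set a := S.min' hne with hadef
    have haS : a ∈ S := S.min'_mem hne
    have ha : 1 ≤ a ∧ a ≤ n := by
      have := hsub haS; simpa [Finset.mem_Icc] using this
    have ham : a ≤ m := by
      by_contra h'
      have hsub2 : S ⊆ Finset.Icc (m + 1) n := by
        intro s hs
        have h1 := S.min'_le s hs
        have h2 := hsub hs
        simp only [Finset.mem_Icc] at h2 ⊢
        omega
      have := Finset.card_le_card hsub2
      rw [hcard, Nat.card_Icc] at this; omega
    have hpan : p * a ≤ n :=
      le_trans (Nat.mul_le_mul (Nat.le_add_right p q) ham) hm1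
    set R := n - p * a with hRdef0
    have hRdef : p * a + R = n := by
      rw [hRdef0]; omega
    set K := R / q with hKdef
    set B := Finset.Icc 1 n \ S with hBdef
    have hBcard : B.card = n - k := by
      rw [hBdef, Finset.card_sdiff_of_subset hsub, Nat.card_Icc, hcard]; omega
    have hBm : B.card + 1 ≤ m := by omega
    set T := S.filter (fun s => s ≤ K) with hTdef
    have hqK : q * K ≤ R := by
      rw [hKdef, mul_comm]; exact Nat.div_mul_le_self _ _
    have hzmem : ∀ s ∈ T, p * a + q * s ∈ B := by
      intro s hs
      rw [hTdef, Finset.mem_filter] at hs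
      obtain ⟨hsS, hsK⟩ := hs
      have hqs : q * s ≤ R := le_trans (Nat.mul_le_mul_left _ hsK) hqK
      have hzn : p * a + q * s ≤ n := by linarith
      have hz1 : 1 ≤ p * a + q * s := by
        have h0 : 0 < p * a := Nat.mul_pos (by omega) (by omega)
        exact le_trans h0 (Nat.le_add_right _ _)
      have hzS : p * a + q * s ∉ S := fun hmem =>
        hfree ⟨a, haS, s, hsS, p * a + q * s, hmem, rfl⟩
      rw [hBdef, Finset.mem_sdiff, Finset.mem_Icc]
      exact ⟨⟨hz1, hzn⟩, hzS⟩
    set Z := T.image (fun s => p * a + q * s) with hZdef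
    have hZcard : Z.card = T.card := by
      rw [hZdef]
      apply Finset.card_image_of_injective
      intro s t hst
      have h := Nat.add_left_cancel hst
      exact Nat.eq_of_mul_eq_mul_left (by omega : 0 < q) h
    have hZB : Z ⊆ B := by
      intro z hz
      rw [hZdef, Finset.mem_image] at hz
      obtain ⟨s, hsT, rfl⟩ := hz
      exact hzmem s hsT
    set A0 := Finset.Icc 1 (a - 1) with hA0def
    have hA0B : A0 ⊆ B := by
      intro x hx
      rw [hA0def, Finset.mem_Icc] at hx
      rw [hBdef, Finset.mem_sdiff, Finset.mem_Icc]
      refine ⟨⟨hx.1, by omega⟩, fun hxS => ?_⟩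
      have := S.min'_le x hxS
      omega
    have hdisj : Disjoint A0 Z := by
      rw [Finset.disjoint_left]
      intro x hxA hxZ
      rw [hA0def, Finset.mem_Icc] at hxA
      rw [hZdef, Finset.mem_image] at hxZ
      obtain ⟨s, hsT, rfl⟩ := hxZ
      have h1 : a ≤ p * a := Nat.le_mul_of_pos_left a (by omega)
      have h2 : p * a + q * s < a := lt_of_le_of_lt hxA.2 (Nat.sub_lt (by omega) one_pos)
      have h3 : 0 ≤ q * s := Nat.zero_le _
      linarith
    have hABcard : A0.card + Z.card ≤ B.card := by
      have h1 : A0 ∪ Z ⊆ B := Finset.union_subset hA0B hZB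
      have h2 := Finset.card_le_card h1
      rwa [Finset.card_union_of_disjoint hdisj] at h2
    have hA0card : A0.card + 1 = a := by
      rw [hA0def, Nat.card_Icc]
      have := ha.1
      omega
    have e1 : a + T.card ≤ B.card + 1 := by
      rw [hZcard] at hABcard
      calc a + T.card = A0.card + 1 + T.card := by rw [hA0card]
        _ ≤ B.card + 1 := by linarith
    have hKn : K ≤ n := by
      have h1 : K ≤ R := Nat.div_le_self _ _
      have h2 : R ≤ n := le_trans (Nat.le_add_left R (p * a)) (le_of_eq hRdef)
      omega
    have e2 : K ≤ T.card + B.card := by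
      have hsub3 : Finset.Icc 1 K ⊆ T ∪ B := by
        intro x hx
        rw [Finset.mem_Icc] at hx
        by_cases hxS : x ∈ S
        · exact Finset.mem_union_left _ (by rw [hTdef, Finset.mem_filter]; exact ⟨hxS, hx.2⟩)
        · refine Finset.mem_union_right _ ?_
          rw [hBdef, Finset.mem_sdiff, Finset.mem_Icc]
          exact ⟨⟨hx.1, le_trans hx.2 hKn⟩, hxS⟩
      calc K = (Finset.Icc 1 K).card := by rw [Nat.card_Icc, Nat.add_sub_cancel]
        _ ≤ (T ∪ B).card := Finset.card_le_card hsub3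
        _ ≤ T.card + B.card := Finset.card_union_le _ _
    -- assemble the contradiction
    have F1 : n + 1 ≤ p * a + q * K + q := by
      have h1 : q * K + R % q = R := Nat.div_add_mod R q
      have h2 : R % q < q := Nat.mod_lt _ (by omega)
      linarith
    have F2 : K + a + 1 ≤ 2 * m := by linarith
    have F3 : q * K + q * a + q ≤ 2 * (q * m) := by
      calc q * K + q * a + q = q * (K + a + 1) := by ring
        _ ≤ q * (2 * m) := Nat.mul_le_mul_left _ F2
        _ = 2 * (q * m) := by ring
    have F4 : p * a + q * m ≤ p * m + q * a := by
      obtain ⟨c, hc⟩ : ∃ c, p = q + c := ⟨p - q, by omega⟩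
      have hca : c * a ≤ c * m := Nat.mul_le_mul_left _ ham
      have h1 : p * a = q * a + c * a := by rw [hc]; ring
      have h2 : p * m = q * m + c * m := by rw [hc]; ring
      linarith
    have F5 : p * m + q * m ≤ n := by
      have h1 : (p + q) * m = p * m + q * m := by ring
      linarith
    linarith

theorem stmt1 (p q : ℕ) (hq : 1 ≤ q) (hpq : q ≤ p) (hp : 2 ≤ p) :
    ∃ N : ℕ, ∀ n : ℕ, N ≤ n →
      IsGreatest {k : ℕ | ∃ S : Finset ℕ, S ⊆ Finset.Icc 1 n ∧
          (¬ ∃ x ∈ S, ∃ y ∈ S, ∃ z ∈ S, p * x + q * y = z) ∧ S.card = k}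
        (n - n / (p + q)) := by
  refine ⟨0, fun n _ => ?_⟩
  have hd : 0 < p + q := by omega
  apply stmt1_aux p q n (n / (p + q)) hq hpq hp
  · exact Nat.mul_div_le n (p + q)
  · conv_lhs => rw [← Nat.div_add_mod n (p + q)]
    exact Nat.add_lt_add_left (Nat.mod_lt n hd) _
end

section
/- Let G be a graph on n vertices and let M be a matching in G consisting of e edges. Let v be a vertex of G covered by M. Then the number of independent sets in G containing v is at most 3^(e−1) · 2^(n−2e). -/
/-!
Let `e₀ ∈ M` be the edge through `v`. An independent set `s ∋ v` meets `e₀` only in `v`, since the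
other endpoint is adjacent to `v`. Hence `s` is recovered from its traces on the other `|M| - 1`
edges of `M` and from its part outside the `2|M|` covered vertices. Each trace is a proper subset of
a two-element edge (3 choices), and the outside part is any subset of the `n - 2|M|` uncovered
vertices.
-/

section

open Finset

variable {V : Type*} [DecidableEq V]

def endpoints (e : V × V) : Finset V := {e.1, e.2}

def coveredVertices (M : Finset (V × V)) : Finset V := M.biUnion endpoints

lemma card_endpoints {e : V × V} (h : e.1 ≠ e.2) : (endpoints e).card = 2 := card_pair h

lemma card_ssubsets_endpoints {e : V × V} (h : e.1 ≠ e.2) : (endpoints e).ssubsets.card = 3 := by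
  rw [ssubsets, card_erase_of_mem (mem_powerset_self _), card_powerset, card_endpoints h]
  rfl

lemma card_coveredVertices {M : Finset (V × V)} (hne : ∀ e ∈ M, e.1 ≠ e.2)
    (hdisj : ∀ e ∈ M, ∀ f ∈ M, e ≠ f →
      e.1 ≠ f.1 ∧ e.1 ≠ f.2 ∧ e.2 ≠ f.1 ∧ e.2 ≠ f.2) :
    (coveredVertices M).card = 2 * M.card := by
  rw [coveredVertices, card_biUnion, sum_congr rfl fun e he => card_endpoints (hne e he), sum_const,
    smul_eq_mul, mul_comm]
  intro e he f hf hef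
  obtain ⟨h11, h12, h21, h22⟩ := hdisj e he f hf hef
  simp only [Function.onFun, endpoints, disjoint_insert_left, disjoint_insert_right,
    disjoint_singleton, mem_insert, mem_singleton]
  tauto

lemma eq_sdiff_coveredVertices_union_biUnion (s : Finset V) (M : Finset (V × V)) :
    s = s \ coveredVertices M ∪ M.biUnion (fun e => s ∩ endpoints e) := by
  rw [← inter_biUnion, ← coveredVertices, sdiff_union_inter]

namespace SimpleGraph

variable (G : SimpleGraph V)

lemma inter_endpoints_ssubset {s : Finset V} (hs : ∀ x ∈ s, ∀ y ∈ s, ¬ G.Adj x y)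
    {e : V × V} (he : G.Adj e.1 e.2) : s ∩ endpoints e ⊂ endpoints e := by
  refine ssubset_of_subset_of_ne inter_subset_right fun heq => ?_
  have hsub : endpoints e ⊆ s := inter_eq_right.mp heq
  exact hs e.1 (hsub (by simp [endpoints])) e.2 (hsub (by simp [endpoints])) he

lemma inter_endpoints_eq_singleton {s : Finset V} (hs : ∀ x ∈ s, ∀ y ∈ s, ¬ G.Adj x y)
    {e : V × V} (he : G.Adj e.1 e.2) {v : V} (hv : v ∈ s) (hve : v = e.1 ∨ v = e.2) :
    s ∩ endpoints e = {v} := by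
  ext x
  simp only [endpoints, mem_inter, mem_insert, mem_singleton]
  grind [G.ne_of_adj he]

lemma eq_sdiff_union_singleton_union_biUnion_erase {s : Finset V}
    (hs : ∀ x ∈ s, ∀ y ∈ s, ¬ G.Adj x y) {M : Finset (V × V)} {e₀ : V × V} (he₀ : e₀ ∈ M)
    (hadj : G.Adj e₀.1 e₀.2) {v : V} (hv : v ∈ s) (hve₀ : v = e₀.1 ∨ v = e₀.2) :
    s = s \ coveredVertices M ∪ {v} ∪ (M.erase e₀).biUnion (fun e => s ∩ endpoints e) := by
  have hsplit : M.biUnion (fun e => s ∩ endpoints e) =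
      s ∩ endpoints e₀ ∪ (M.erase e₀).biUnion (fun e => s ∩ endpoints e) := by
    conv_lhs => rw [← insert_erase he₀]
    rw [biUnion_insert]
  rw [union_assoc, ← G.inter_endpoints_eq_singleton hs hadj hv hve₀, ← hsplit]
  exact eq_sdiff_coveredVertices_union_biUnion s M

theorem card_filter_indep_mem_le [Fintype V]
    {v : V} [DecidablePred fun s : Finset V => v ∈ s ∧ ∀ x ∈ s, ∀ y ∈ s, ¬ G.Adj x y]
    {M : Finset (V × V)} (hadj : ∀ e ∈ M, G.Adj e.1 e.2) {e₀ : V × V} (he₀ : e₀ ∈ M)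
    (hve₀ : v = e₀.1 ∨ v = e₀.2) :
    (univ.filter fun s : Finset V => v ∈ s ∧ ∀ x ∈ s, ∀ y ∈ s, ¬ G.Adj x y).card ≤
      3 ^ (M.erase e₀).card * 2 ^ (univ \ coveredVertices M).card := by
  set M' := M.erase e₀
  have hadj' (e : M') : G.Adj e.1.1 e.1.2 := hadj e (mem_of_mem_erase e.2)
  let trace (s : Finset V) : (M' → Finset V) × Finset V :=
    (fun e => s ∩ endpoints e.1, s \ coveredVertices M)
  have hrecover : ∀ s : Finset V, v ∈ s → (∀ x ∈ s, ∀ y ∈ s, ¬ G.Adj x y) →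
      s = (trace s).2 ∪ {v} ∪ M'.attach.biUnion (trace s).1 := by
    intro s hv hs
    rw [attach_biUnion (f := fun e => s ∩ endpoints e)]
    exact G.eq_sdiff_union_singleton_union_biUnion_erase hs he₀ (hadj e₀ he₀) hv hve₀
  calc _ ≤ (Fintype.piFinset (fun e : M' => (endpoints e.1).ssubsets) ×ˢ
          (univ \ coveredVertices M).powerset).card := by
        refine card_le_card_of_injOn trace (fun s hs => ?_) (fun s hs t ht hst => ?_)
        · obtain ⟨-, -, hs⟩ := mem_filter.mp hs
          refine mem_product.mpr ⟨Fintype.mem_piFinset.mpr fun e => ?_, ?_⟩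
          · exact mem_ssubsets.mpr (G.inter_endpoints_ssubset hs (hadj' e))
          · exact mem_powerset.mpr (sdiff_subset_sdiff (subset_univ s) le_rfl)
        · obtain ⟨-, hvs, hs⟩ := mem_filter.mp hs
          obtain ⟨-, hvt, ht⟩ := mem_filter.mp ht
          rw [hrecover s hvs hs, hrecover t hvt ht, hst]
    _ = _ := by
        rw [card_product, Fintype.card_piFinset, card_powerset,
          prod_congr rfl fun e _ => card_ssubsets_endpoints (hadj' e).ne,
          prod_const, card_univ, Fintype.card_coe]

end SimpleGraph

end

open Classical in
theorem stmt3 {V : Type*} [Fintype V] (G : SimpleGraph V) (M : Finset (V × V))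
    (hadj : ∀ e ∈ M, G.Adj e.1 e.2)
    (hdisj : ∀ e ∈ M, ∀ f ∈ M, e ≠ f →
      e.1 ≠ f.1 ∧ e.1 ≠ f.2 ∧ e.2 ≠ f.1 ∧ e.2 ≠ f.2)
    (v : V) (hv : ∃ e ∈ M, v = e.1 ∨ v = e.2) :
    ((Finset.univ : Finset (Finset V)).filter
        (fun s => v ∈ s ∧ ∀ x ∈ s, ∀ y ∈ s, ¬ G.Adj x y)).card ≤
      3 ^ (M.card - 1) * 2 ^ (Fintype.card V - 2 * M.card) := by
  obtain ⟨e₀, he₀, hve₀⟩ := hv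
  have hcovered := card_coveredVertices (fun e he => (hadj e he).ne) hdisj
  calc _ ≤ 3 ^ (M.erase e₀).card * 2 ^ (Finset.univ \ coveredVertices M).card :=
        G.card_filter_indep_mem_le hadj he₀ hve₀
    _ = _ := by rw [Finset.card_erase_of_mem he₀, Finset.card_univ_sdiff, hcovered]
end

section
/- Let p ≥ q ≥ 2 be integers with q² ≥ p + q, let u ∈ [n], A ⊆ [1,u] and B ⊆ [u+1,n]. Then the link graph L_A[B] (with respect to the equation px + qy = z) is triangle-free. -/
/-- Adjacency in the link graph of `A` on `B` for the equation `p*x + q*y = z`: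
two distinct vertices are adjacent if together with some `s ∈ A` they form a
solution of the equation (under some assignment to the variables). -/
def LinkAdj (p q : ℕ) (A : Finset ℕ) (x y : ℕ) : Prop :=
  x ≠ y ∧ ∃ s ∈ A,
    p * x + q * y = s ∨ p * y + q * x = s ∨ p * x + q * s = y ∨
    p * s + q * x = y ∨ p * y + q * s = x ∨ p * s + q * y = x

lemma linkAdj_symm {p q : ℕ} {A : Finset ℕ} {x y : ℕ} (h : LinkAdj p q A x y) :
    LinkAdj p q A y x := by
  obtain ⟨hne, s, hs, H⟩ := h
  exact ⟨hne.symm, s, hs, by tauto⟩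

lemma edge_form {p q u : ℕ} {A : Finset ℕ} (hq : 2 ≤ q) (hpq : q ≤ p)
    (hA : A ⊆ Finset.Icc 1 u) {a b : ℕ} (ha : u + 1 ≤ a) (hb : u + 1 ≤ b)
    (hab : a < b) (e : LinkAdj p q A a b) :
    ∃ s ∈ A, s < a ∧ (b = p * a + q * s ∨ b = p * s + q * a) := by
  obtain ⟨-, s, hs, H⟩ := e
  have hsu := Finset.mem_Icc.mp (hA hs)
  have hsa : s < a := by omega
  refine ⟨s, hs, hsa, ?_⟩
  rcases H with H | H | H | H | H | H
  · nlinarith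
  · nlinarith
  · exact Or.inl H.symm
  · exact Or.inr H.symm
  · nlinarith
  · nlinarith

lemma core {p q u : ℕ} {A : Finset ℕ} (hq : 2 ≤ q) (hpq : q ≤ p)
    (h : p + q ≤ q ^ 2) (hA : A ⊆ Finset.Icc 1 u) {x y z : ℕ}
    (hx : u + 1 ≤ x) (hy : u + 1 ≤ y) (hz : u + 1 ≤ z)
    (hxy : x < y) (hyz : y < z)
    (e1 : LinkAdj p q A x y) (e2 : LinkAdj p q A y z) (e3 : LinkAdj p q A x z) :
    False := by
  obtain ⟨s1, hs1, hs1x, H1⟩ := edge_form hq hpq hA hx hy hxy e1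
  obtain ⟨s3, hs3, hs3y, H3⟩ := edge_form hq hpq hA hy hz hyz e2
  obtain ⟨s2, hs2, hs2x, H2⟩ := edge_form hq hpq hA hx hz (hxy.trans hyz) e3
  have hpqx : q * x ≤ p * x := Nat.mul_le_mul_right x hpq
  have hqx : q * x ≤ y := by rcases H1 with H1 | H1 <;> omega
  have hpqy : q * y ≤ p * y := Nat.mul_le_mul_right y hpq
  have hqy : q * y ≤ z := by rcases H3 with H3 | H3 <;> omega
  have hzlt : z < (p + q) * x := by
    have h1 : q * s2 < q * x := Nat.mul_lt_mul_of_pos_left hs2x (by omega)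
    have h2 : p * s2 < p * x := Nat.mul_lt_mul_of_pos_left hs2x (by omega)
    have h3 : (p + q) * x = p * x + q * x := by ring
    rcases H2 with H2 | H2 <;> omega
  have h4 : (p + q) * x ≤ q ^ 2 * x := Nat.mul_le_mul_right x h
  have h5 : q ^ 2 * x = q * (q * x) := by ring
  have h6 : q * (q * x) ≤ q * y := Nat.mul_le_mul_left q hqx
  omega

theorem stmt4 (p q n u : ℕ) (hq : 2 ≤ q) (hpq : q ≤ p) (h : p + q ≤ q ^ 2)
    (hu : u ∈ Finset.Icc 1 n)
    (A B : Finset ℕ) (hA : A ⊆ Finset.Icc 1 u) (hB : B ⊆ Finset.Icc (u + 1) n) :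
    ¬ ∃ x ∈ B, ∃ y ∈ B, ∃ z ∈ B, x ≠ y ∧ y ≠ z ∧ x ≠ z ∧
      LinkAdj p q A x y ∧ LinkAdj p q A y z ∧ LinkAdj p q A x z := by
  rintro ⟨x, hxB, y, hyB, z, hzB, hxy, hyz, hxz, e1, e2, e3⟩
  have hx := (Finset.mem_Icc.mp (hB hxB)).1
  have hy := (Finset.mem_Icc.mp (hB hyB)).1
  have hz := (Finset.mem_Icc.mp (hB hzB)).1
  rcases Nat.lt_or_ge x y with h1 | h1
  · rcases Nat.lt_or_ge y z with h2 | h2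
    · exact core hq hpq h hA hx hy hz h1 h2 e1 e2 e3
    · rcases Nat.lt_or_ge x z with h3 | h3
      · exact core hq hpq h hA hx hz hy h3 (by omega) e3 (linkAdj_symm e2) e1
      · exact core hq hpq h hA hz hx hy (by omega) h1 (linkAdj_symm e3) e1
          (linkAdj_symm e2)
  · rcases Nat.lt_or_ge x z with h2 | h2
    · exact core hq hpq h hA hy hx hz (by omega) h2 (linkAdj_symm e1) e3 e2
    · rcases Nat.lt_or_ge y z with h3 | h3
      · exact core hq hpq h hA hy hz hx h3 (by omega) e2 (linkAdj_symm e3)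
          (linkAdj_symm e1)
      · exact core hq hpq h hA hz hy hx (by omega) (by omega) (linkAdj_symm e2)
          (linkAdj_symm e1) (linkAdj_symm e3)
end

section
/- Fix a three-variable linear equation L. Let B and S be disjoint L-free subsets of [n], and let H be an induced subgraph of the link graph L_S[B]. If I and J are distinct maximal independent sets in H, then S ∪ I and S ∪ J are L-free, and no L-free subset of [n] contains both S ∪ I and S ∪ J. Consequently the number of maximal L-free subsets of [n] is at least the number of maximal independent sets in H. -/
/-- The (ordered) triple `(x,y,z)` is a trivial solution of the three-variable
linear equation `a1*x + a2*y + a3*z = b`: there is a partition of the variables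
into classes on which the values agree and whose coefficient sums are zero. -/
def IsTrivialSol (a1 a2 a3 : ℤ) (x y z : ℕ) : Prop :=
  (x = y ∧ y = z ∧ a1 + a2 + a3 = 0) ∨
  (x = y ∧ a1 + a2 = 0 ∧ a3 = 0) ∨
  (x = z ∧ a1 + a3 = 0 ∧ a2 = 0) ∨
  (y = z ∧ a2 + a3 = 0 ∧ a1 = 0) ∨
  (a1 = 0 ∧ a2 = 0 ∧ a3 = 0)

/-- A set is `L`-free if it contains no nontrivial solution of
`a1*x + a2*y + a3*z = b`. -/
def LFree (a1 a2 a3 b : ℤ) (S : Finset ℕ) : Prop :=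
  ¬ ∃ x ∈ S, ∃ y ∈ S, ∃ z ∈ S,
    a1 * (x : ℤ) + a2 * (y : ℤ) + a3 * (z : ℤ) = b ∧ ¬ IsTrivialSol a1 a2 a3 x y z

/-- The multiset `{x, y, z}` forms a solution of `a1*x + a2*y + a3*z = b`,
i.e. some assignment of its elements to the variables satisfies the equation. -/
def IsSolTriple (a1 a2 a3 b : ℤ) (x y z : ℕ) : Prop :=
  a1 * (x : ℤ) + a2 * (y : ℤ) + a3 * (z : ℤ) = b ∨
  a1 * (x : ℤ) + a2 * (z : ℤ) + a3 * (y : ℤ) = b ∨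
  a1 * (y : ℤ) + a2 * (x : ℤ) + a3 * (z : ℤ) = b ∨
  a1 * (y : ℤ) + a2 * (z : ℤ) + a3 * (x : ℤ) = b ∨
  a1 * (z : ℤ) + a2 * (x : ℤ) + a3 * (y : ℤ) = b ∨
  a1 * (z : ℤ) + a2 * (y : ℤ) + a3 * (x : ℤ) = b

/-- Edge of the link graph `L_S[B]`: distinct `x, y` are adjacent if together
with some `z ∈ S` they form a solution. -/
def LinkEdge (a1 a2 a3 b : ℤ) (S : Finset ℕ) (x y : ℕ) : Prop :=
  x ≠ y ∧ ∃ z ∈ S, IsSolTriple a1 a2 a3 b x y z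

/-- Loop of the link graph `L_S[B]` at `x`: the multiset `{x,x,z}` or `{x,z,z'}`
is a solution for some `z, z' ∈ S`. -/
def LinkLoop (a1 a2 a3 b : ℤ) (S : Finset ℕ) (x : ℕ) : Prop :=
  (∃ z ∈ S, IsSolTriple a1 a2 a3 b x x z) ∨
  (∃ z ∈ S, ∃ z' ∈ S, IsSolTriple a1 a2 a3 b x z z')

/-- `I` is an independent set of the link graph of `S` (no loops, no edges). -/
def LinkIndep (a1 a2 a3 b : ℤ) (S I : Finset ℕ) : Prop :=
  (∀ x ∈ I, ¬ LinkLoop a1 a2 a3 b S x) ∧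
  (∀ x ∈ I, ∀ y ∈ I, ¬ LinkEdge a1 a2 a3 b S x y)

/-- `I` is a maximal independent set of the link graph of `S` induced on the
vertex set `W`. -/
def LinkMaxIndep (a1 a2 a3 b : ℤ) (S W I : Finset ℕ) : Prop :=
  I ⊆ W ∧ LinkIndep a1 a2 a3 b S I ∧
  ∀ x ∈ W, x ∉ I → ¬ LinkIndep a1 a2 a3 b S (insert x I)

/-- `T` is a maximal `L`-free subset of `[n]`. -/
def MaxLFree (a1 a2 a3 b : ℤ) (n : ℕ) (T : Finset ℕ) : Prop :=
  T ⊆ Finset.Icc 1 n ∧ LFree a1 a2 a3 b T ∧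
  ∀ T' : Finset ℕ, T' ⊆ Finset.Icc 1 n → LFree a1 a2 a3 b T' → T ⊆ T' → T' = T


/-- If a solution with not-all-equal entries is trivial, the equation is
degenerate: every multiset `{u,u,v}` is a solution. -/
lemma allDeg_of_trivial (a1 a2 a3 b : ℤ) (x y z : ℕ)
    (hsol : a1 * (x : ℤ) + a2 * (y : ℤ) + a3 * (z : ℤ) = b)
    (ht : IsTrivialSol a1 a2 a3 x y z) (hne : ¬(x = y ∧ y = z)) :
    ∀ u v : ℕ, IsSolTriple a1 a2 a3 b u u v := by
  intro u v
  rcases ht with ⟨h1, h2, _⟩ | ⟨h1, h2, h3⟩ | ⟨h1, h2, h3⟩ | ⟨h1, h2, h3⟩ | ⟨h1, h2, h3⟩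
  · exact absurd ⟨h1, h2⟩ hne
  · subst h1
    exact Or.inl (by linear_combination hsol + ((u : ℤ) - (x : ℤ)) * h2 + ((v : ℤ) - (z : ℤ)) * h3)
  · subst h1
    exact Or.inr (Or.inl (by
      linear_combination hsol + ((u : ℤ) - (x : ℤ)) * h2 + ((v : ℤ) - (y : ℤ)) * h3))
  · subst h1
    exact Or.inr (Or.inr (Or.inr (Or.inr (Or.inl (by
      linear_combination hsol + ((u : ℤ) - (y : ℤ)) * h2 + ((v : ℤ) - (x : ℤ)) * h3)))))
  · exact Or.inl (by
      linear_combination hsol + ((u : ℤ) - (x : ℤ)) * h1 + ((u : ℤ) - (y : ℤ)) * h2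
        + ((v : ℤ) - (z : ℤ)) * h3)

lemma key_ord (a1 a2 a3 b : ℤ) (T : Finset ℕ) (hT : LFree a1 a2 a3 b T)
    (p q r : ℕ) (hp : p ∈ T) (hq : q ∈ T) (hr : r ∈ T) (hne : ¬(p = q ∧ q = r))
    (h : a1 * (p : ℤ) + a2 * (q : ℤ) + a3 * (r : ℤ) = b) :
    ∀ u v : ℕ, IsSolTriple a1 a2 a3 b u u v := by
  by_cases ht : IsTrivialSol a1 a2 a3 p q r
  · exact allDeg_of_trivial a1 a2 a3 b p q r h ht hne
  · exact absurd ⟨p, hp, q, hq, r, hr, h, ht⟩ hT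

/-- Key lemma: a solution triple with not-all-equal entries inside an `L`-free
set forces the equation to be degenerate. -/
lemma key (a1 a2 a3 b : ℤ) (T : Finset ℕ) (hT : LFree a1 a2 a3 b T)
    (x y z : ℕ) (hx : x ∈ T) (hy : y ∈ T) (hz : z ∈ T) (hxz : x ≠ z)
    (h : IsSolTriple a1 a2 a3 b x y z) :
    ∀ u v : ℕ, IsSolTriple a1 a2 a3 b u u v := by
  rcases h with h | h | h | h | h | h
  · exact key_ord a1 a2 a3 b T hT x y z hx hy hz (by rintro ⟨e1, e2⟩; omega) h
  · exact key_ord a1 a2 a3 b T hT x z y hx hz hy (by rintro ⟨e1, e2⟩; omega) h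
  · exact key_ord a1 a2 a3 b T hT y x z hy hx hz (by rintro ⟨e1, e2⟩; omega) h
  · exact key_ord a1 a2 a3 b T hT y z x hy hz hx (by rintro ⟨e1, e2⟩; omega) h
  · exact key_ord a1 a2 a3 b T hT z x y hz hx hy (by rintro ⟨e1, e2⟩; omega) h
  · exact key_ord a1 a2 a3 b T hT z y x hz hy hx (by rintro ⟨e1, e2⟩; omega) h

/-- An independent set of the link graph together with `S` is `L`-free. -/
lemma union_free (a1 a2 a3 b : ℤ) (S B I : Finset ℕ) (hd : Disjoint S B)
    (hSfree : LFree a1 a2 a3 b S) (hBfree : LFree a1 a2 a3 b B)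
    (hIB : I ⊆ B) (hind : LinkIndep a1 a2 a3 b S I) :
    LFree a1 a2 a3 b (S ∪ I) := by
  obtain ⟨hloop, hedge⟩ := hind
  rintro ⟨x, hx, y, hy, z, hz, heq, hnt⟩
  simp only [Finset.mem_union] at hx hy hz
  rcases hx with hx | hx <;> rcases hy with hy | hy <;> rcases hz with hz | hz
  · exact hSfree ⟨x, hx, y, hy, z, hz, heq, hnt⟩
  · exact hloop z hz (Or.inr ⟨x, hx, y, hy, by unfold IsSolTriple; tauto⟩)
  · exact hloop y hy (Or.inr ⟨x, hx, z, hz, by unfold IsSolTriple; tauto⟩)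
  · by_cases hyz : y = z
    · subst hyz
      exact hloop y hy (Or.inl ⟨x, hx, by unfold IsSolTriple; tauto⟩)
    · exact hedge y hy z hz ⟨hyz, x, hx, by unfold IsSolTriple; tauto⟩
  · exact hloop x hx (Or.inr ⟨y, hy, z, hz, by unfold IsSolTriple; tauto⟩)
  · by_cases hxz : x = z
    · subst hxz
      exact hloop x hx (Or.inl ⟨y, hy, by unfold IsSolTriple; tauto⟩)
    · exact hedge x hx z hz ⟨hxz, y, hy, by unfold IsSolTriple; tauto⟩
  · by_cases hxy : x = y
    · subst hxy
      exact hloop x hx (Or.inl ⟨z, hz, by unfold IsSolTriple; tauto⟩)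
    · exact hedge x hx y hy ⟨hxy, z, hz, by unfold IsSolTriple; tauto⟩
  · exact hBfree ⟨x, hIB hx, y, hIB hy, z, hIB hz, heq, hnt⟩

/-- Every `L`-free subset of `[n]` extends to a maximal one. -/
lemma exists_max (a1 a2 a3 b : ℤ) (n : ℕ) (A : Finset ℕ) (hA : A ⊆ Finset.Icc 1 n)
    (hAf : LFree a1 a2 a3 b A) : ∃ T, MaxLFree a1 a2 a3 b n T ∧ A ⊆ T := by
  classical
  set 𝒮 := (Finset.Icc 1 n).powerset.filter (fun T => LFree a1 a2 a3 b T ∧ A ⊆ T) with h𝒮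
  have hA𝒮 : A ∈ 𝒮 := by
    simp only [h𝒮, Finset.mem_filter, Finset.mem_powerset]
    exact ⟨hA, hAf, subset_rfl⟩
  obtain ⟨T, hT, hmax⟩ := 𝒮.exists_max_image Finset.card ⟨A, hA𝒮⟩
  simp only [h𝒮, Finset.mem_filter, Finset.mem_powerset] at hT
  refine ⟨T, ⟨hT.1, hT.2.1, ?_⟩, hT.2.2⟩
  intro T' hT'1 hT'2 hTT'
  have hT'𝒮 : T' ∈ 𝒮 := by
    simp only [h𝒮, Finset.mem_filter, Finset.mem_powerset]
    exact ⟨hT'1, hT'2, hT.2.2.trans hTT'⟩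
  exact (Finset.eq_of_subset_of_card_le hTT' (hmax T' hT'𝒮)).symm

/-- Two distinct maximal independent sets have no common `L`-free extension. -/
lemma no_common (a1 a2 a3 b : ℤ) (S W I J T : Finset ℕ) (hdSW : Disjoint S W)
    (hI : LinkMaxIndep a1 a2 a3 b S W I) (hJ : LinkMaxIndep a1 a2 a3 b S W J)
    (x : ℕ) (hxI : x ∈ I) (hxJ : x ∉ J)
    (hTfree : LFree a1 a2 a3 b T) (hST : S ⊆ T) (hIT : I ⊆ T) (hJT : J ⊆ T) :
    False := by
  have hxW : x ∈ W := hI.1 hxI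
  have hxT : x ∈ T := hIT hxI
  have hni : ¬ LinkIndep a1 a2 a3 b S (insert x J) := hJ.2.2 x hxW hxJ
  have hmemT : ∀ w ∈ insert x J, w ∈ T := by
    intro w hw
    rcases Finset.mem_insert.mp hw with h | h
    · exact h ▸ hxT
    · exact hJT h
  have hmemW : ∀ w ∈ insert x J, w ∈ W := by
    intro w hw
    rcases Finset.mem_insert.mp hw with h | h
    · exact h ▸ hxW
    · exact hJ.1 h
  have hdeg : ∃ z ∈ S, ∀ u v : ℕ, IsSolTriple a1 a2 a3 b u u v := by
    rw [LinkIndep, not_and_or] at hni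
    rcases hni with h | h
    · push_neg at h
      obtain ⟨w, hw, hloop⟩ := h
      have hwT : w ∈ T := hmemT w hw
      have hwW : w ∈ W := hmemW w hw
      rcases hloop with ⟨z, hzS, hsol⟩ | ⟨z, hzS, z', hz'S, hsol⟩
      · have hwz : w ≠ z := fun e => Finset.disjoint_right.mp hdSW hwW (e ▸ hzS)
        exact ⟨z, hzS, key a1 a2 a3 b T hTfree w w z hwT hwT (hST hzS) hwz hsol⟩
      · have hwz' : w ≠ z' := fun e => Finset.disjoint_right.mp hdSW hwW (e ▸ hz'S)
        exact ⟨z, hzS, key a1 a2 a3 b T hTfree w z z' hwT (hST hzS) (hST hz'S) hwz' hsol⟩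
    · push_neg at h
      obtain ⟨u, hu, v, hv, huv, z, hzS, hsol⟩ := h
      have huW : u ∈ W := hmemW u hu
      have huz : u ≠ z := fun e => Finset.disjoint_right.mp hdSW huW (e ▸ hzS)
      exact ⟨z, hzS, key a1 a2 a3 b T hTfree u v z (hmemT u hu) (hmemT v hv) (hST hzS) huz hsol⟩
  obtain ⟨z, hzS, hdeg⟩ := hdeg
  exact hI.2.1.1 x hxI (Or.inl ⟨z, hzS, hdeg x z⟩)

theorem stmt5 (a1 a2 a3 b : ℤ) (n : ℕ) (S B W : Finset ℕ)
    (hS : S ⊆ Finset.Icc 1 n) (hB : B ⊆ Finset.Icc 1 n) (hd : Disjoint S B)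
    (hSfree : LFree a1 a2 a3 b S) (hBfree : LFree a1 a2 a3 b B) (hW : W ⊆ B) :
    (∀ I J : Finset ℕ, LinkMaxIndep a1 a2 a3 b S W I →
      LinkMaxIndep a1 a2 a3 b S W J → I ≠ J →
      LFree a1 a2 a3 b (S ∪ I) ∧ LFree a1 a2 a3 b (S ∪ J) ∧
      ¬ ∃ T : Finset ℕ, T ⊆ Finset.Icc 1 n ∧ LFree a1 a2 a3 b T ∧
        S ∪ I ⊆ T ∧ S ∪ J ⊆ T) ∧
    {I : Finset ℕ | LinkMaxIndep a1 a2 a3 b S W I}.ncard ≤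
      {T : Finset ℕ | MaxLFree a1 a2 a3 b n T}.ncard := by
  classical
  have hdSW : Disjoint S W := hd.mono_right hW
  constructor
  · intro I J hI hJ hne
    refine ⟨union_free a1 a2 a3 b S B I hd hSfree hBfree (hI.1.trans hW) hI.2.1,
      union_free a1 a2 a3 b S B J hd hSfree hBfree (hJ.1.trans hW) hJ.2.1, ?_⟩
    rintro ⟨T, hTn, hTfree, hIT, hJT⟩
    have hST : S ⊆ T := (Finset.subset_union_left).trans hIT
    have hIT' : I ⊆ T := (Finset.subset_union_right).trans hIT
    have hJT' : J ⊆ T := (Finset.subset_union_right).trans hJT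
    by_cases hIJ : I ⊆ J
    · have hJI : ¬ J ⊆ I := fun h => hne (Finset.Subset.antisymm hIJ h)
      obtain ⟨x, hxJ, hxI⟩ := Finset.not_subset.mp hJI
      exact no_common a1 a2 a3 b S W J I T hdSW hJ hI x hxJ hxI hTfree hST hJT' hIT'
    · obtain ⟨x, hxI, hxJ⟩ := Finset.not_subset.mp hIJ
      exact no_common a1 a2 a3 b S W I J T hdSW hI hJ x hxI hxJ hTfree hST hIT' hJT'
  · have ht_fin : {T : Finset ℕ | MaxLFree a1 a2 a3 b n T}.Finite := by
      apply Set.Finite.subset ((Finset.Icc 1 n).powerset : Finset (Finset ℕ)).finite_toSet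
      intro T hT
      simp only [Finset.coe_powerset, Set.mem_preimage, Set.mem_powerset_iff,
        Finset.coe_subset]
      exact hT.1
    have hmap : ∀ I : Finset ℕ, ∃ T : Finset ℕ,
        LinkMaxIndep a1 a2 a3 b S W I → (MaxLFree a1 a2 a3 b n T ∧ S ∪ I ⊆ T) := by
      intro I
      by_cases h : LinkMaxIndep a1 a2 a3 b S W I
      · have hfree := union_free a1 a2 a3 b S B I hd hSfree hBfree (h.1.trans hW) h.2.1
        have hsub : S ∪ I ⊆ Finset.Icc 1 n :=
          Finset.union_subset hS ((h.1.trans hW).trans hB)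
        obtain ⟨T, hT1, hT2⟩ := exists_max a1 a2 a3 b n (S ∪ I) hsub hfree
        exact ⟨T, fun _ => ⟨hT1, hT2⟩⟩
      · exact ⟨∅, fun h' => absurd h' h⟩
    choose f hf using hmap
    apply Set.ncard_le_ncard_of_injOn f (fun I hI => by exact (hf I hI).1) ?_ ht_fin
    intro I hI J hJ hfeq
    by_contra hne
    have h1 := hf I hI
    have h2 := hf J hJ
    have hJf : S ∪ J ⊆ f I := hfeq ▸ h2.2
    have hST : S ⊆ f I := (Finset.subset_union_left).trans h1.2
    have hIT : I ⊆ f I := (Finset.subset_union_right).trans h1.2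
    have hJT : J ⊆ f I := (Finset.subset_union_right).trans hJf
    by_cases hIJ : I ⊆ J
    · have hJI : ¬ J ⊆ I := fun h => hne (Finset.Subset.antisymm hIJ h)
      obtain ⟨x, hxJ, hxI⟩ := Finset.not_subset.mp hJI
      exact no_common a1 a2 a3 b S W J I (f I) hdSW hJ hI x hxJ hxI h1.1.2.1 hST hJT hIT
    · obtain ⟨x, hxI, hxJ⟩ := Finset.not_subset.mp hIJ
      exact no_common a1 a2 a3 b S W I J (f I) hdSW hI hJ x hxI hxJ h1.1.2.1 hST hIT hJT
end

section
/- Let p ≥ q ≥ 1 with p ≥ 2, let L be the equation px + qy = z, and let t be a non-negative integer with t < ((p+q−1)/(p+q+p/q))·⌊n/(p+q)⌋. Then every L-free subset S of [n] with min(S) = ⌊n/(p+q)⌋ − t satisfies |S| ≤ ⌈(p+q−1)n/(p+q)⌉ − ⌊pt/q⌋. -/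
/-!
Let `m = ⌊n/(p+q)⌋`, `a = min S = m - t` and `K = ⌊(n - p a)/q⌋`. For `y ∈ S` with `y ≤ K` the
number `p a + q y` lies in `[(p+q) a, n]` and, `S` being `L`-free, outside `S`. As `y ↦ p a + q y`
is injective, with `c = min ((p+q) a) (K+1)` these images and the elements of `S` that are at least
`c` form disjoint subsets of `[c, n]`, while the elements of `S` below `c` are at most `K`; hence
`|S| ≤ n + 1 - c`. The bound on `t` is what makes `m + ⌊p t/q⌋ < c`, and
`⌈(p+q-1) n/(p+q)⌉ = n - m`.
-/

theorem Finset.card_le_sub_of_injective_mapsTo_compl (S : Finset ℕ) {n c K : ℕ} {f : ℕ → ℕ}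
    (hc : c ≤ K + 1) (hSn : ∀ y ∈ S, y ≤ n) (hf : Function.Injective f)
    (hmaps : ∀ y ∈ S, y ≤ K → c ≤ f y ∧ f y ≤ n ∧ f y ∉ S) :
    S.card ≤ n + 1 - c := by
  set low := S.filter (· ≤ K)
  set high := S.filter (fun y => ¬ y < c)
  have hlow : S.filter (· < c) ⊆ low := fun y hy => by
    simp only [Finset.mem_filter, low] at hy ⊢
    exact ⟨hy.1, by omega⟩
  have hdisj : Disjoint high (low.image f) := by
    simp only [Finset.disjoint_right, Finset.mem_image, Finset.mem_filter, high, low]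
    rintro _ ⟨y, ⟨hyS, hyK⟩, rfl⟩ hfy
    exact (hmaps y hyS hyK).2.2 hfy.1
  have hsub : high ∪ low.image f ⊆ Finset.Icc c n := by
    intro z hz
    simp only [Finset.mem_union, Finset.mem_image, Finset.mem_filter, high, low] at hz
    rcases hz with ⟨hzS, hzc⟩ | ⟨y, ⟨hyS, hyK⟩, rfl⟩
    · exact Finset.mem_Icc.mpr ⟨by omega, hSn z hzS⟩
    · exact Finset.mem_Icc.mpr ⟨(hmaps y hyS hyK).1, (hmaps y hyS hyK).2.1⟩
  calc S.card = (S.filter (· < c)).card + high.card :=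
        (Finset.card_filter_add_card_filter_not _).symm
    _ ≤ (low.image f).card + high.card := by
        rw [Finset.card_image_of_injective _ hf]
        gcongr
    _ = (high ∪ low.image f).card := by rw [Finset.card_union_of_disjoint hdisj, add_comm]
    _ ≤ (Finset.Icc c n).card := Finset.card_le_card hsub
    _ = n + 1 - c := Nat.card_Icc c n

theorem Nat.ceil_pred_mul_div {d : ℕ} (hd : 0 < d) (n : ℕ) :
    ⌈((d : ℚ) - 1) * n / d⌉₊ = n - n / d := by
  have hdQ : (0 : ℚ) < d := by exact_mod_cast hd
  have hx : ((d : ℚ) - 1) * n / d = n - (n : ℚ) / d := by field_simp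
  have hdiv : ((n / d : ℕ) : ℚ) ≤ (n : ℚ) / d := Nat.cast_div_le
  have hlt : (n : ℚ) / d < (n / d : ℕ) + 1 := by
    rw [← Nat.floor_div_eq_div (K := ℚ)]; exact Nat.lt_floor_add_one _
  rw [hx]
  apply le_antisymm
  · apply Nat.ceil_le.mpr
    rw [Nat.cast_sub (Nat.div_le_self n d)]
    linarith
  · have : n < ⌈(n : ℚ) - n / d⌉₊ + n / d + 1 := by
      have := Nat.le_ceil ((n : ℚ) - n / d)
      exact_mod_cast (by linarith : (n : ℚ) < ⌈(n : ℚ) - n / d⌉₊ + (n / d : ℕ) + 1)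
    omega

theorem mul_add_mul_lt_mul_sub {p q m t : ℕ} (hq : 1 ≤ q)
    (ht : (t : ℚ) < (((p : ℚ) + q - 1) / ((p : ℚ) + q + (p : ℚ) / q)) * m) :
    q * m + p * t < q * (p + q) * (m - t) := by
  have hqQ : (1 : ℚ) ≤ q := by exact_mod_cast hq
  have hB : (0 : ℚ) < p + q + p / q := by
    have : (0 : ℚ) ≤ p / q := by positivity
    linarith
  have hscaled : (t : ℚ) * (q * (p + q) + p) < q * (p + q - 1) * m := by
    rw [div_mul_eq_mul_div, lt_div_iff₀ hB] at ht
    have e : (t : ℚ) * (q * (p + q) + p) = q * (t * (p + q + p / q)) := by field_simp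
    rw [e]
    nlinarith
  have htm : t ≤ m := by
    by_contra! hmt
    have hmtQ : (m : ℚ) < t := by exact_mod_cast hmt
    have : (0 : ℚ) ≤ p := by positivity
    nlinarith [mul_le_mul_of_nonneg_left hmtQ.le (by positivity : (0 : ℚ) ≤ q * (p + q) + p)]
  have : ((q * m + p * t : ℕ) : ℚ) < ((q * (p + q) * (m - t) : ℕ) : ℚ) := by
    push_cast [Nat.cast_sub htm]
    linarith
  exact_mod_cast this

theorem card_le_of_min_of_not_mul_add_mul_mem {p q n a : ℕ} (hq : 1 ≤ q) (S : Finset ℕ)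
    (hSn : ∀ y ∈ S, y ≤ n) (hfree : ¬ ∃ x ∈ S, ∃ y ∈ S, ∃ z ∈ S, p * x + q * y = z)
    (hmin : S.min = a) :
    S.card ≤ n + 1 - min ((p + q) * a) ((n - p * a) / q + 1) := by
  refine S.card_le_sub_of_injective_mapsTo_compl (min_le_right _ _) hSn
    (f := fun y => p * a + q * y)
    (fun y z h => Nat.eq_of_mul_eq_mul_left hq (Nat.add_left_cancel h)) fun y hy hyK => ?_
  have hay : a ≤ y := Finset.min_le_of_eq hy hmin
  have hqy : q * y ≤ n - p * a := mul_comm q y ▸ (Nat.le_div_iff_mul_le hq).mp hyK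
  have hpa : p * a ≤ n := by
    rcases Nat.eq_zero_or_pos y with rfl | hy0
    · simp_all
    · have := Nat.mul_pos (by omega : 0 < q) hy0
      omega
  refine ⟨min_le_of_left_le (by nlinarith), by omega, fun h => hfree ?_⟩
  exact ⟨a, Finset.mem_of_min hmin, y, hy, _, h, rfl⟩

theorem stmt13_general (p q n t : ℕ) (hq : 1 ≤ q)
    (ht : (t : ℚ) <
      (((p : ℚ) + q - 1) / ((p : ℚ) + q + (p : ℚ) / q)) * ((n / (p + q) : ℕ) : ℚ))
    (S : Finset ℕ) (hS : S ⊆ Finset.Icc 1 n)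
    (hfree : ¬ ∃ x ∈ S, ∃ y ∈ S, ∃ z ∈ S, p * x + q * y = z)
    (hmin : S.min = ((n / (p + q) - t : ℕ) : WithTop ℕ)) :
    S.card ≤ ⌈(((p : ℚ) + q - 1) * n) / ((p : ℚ) + q)⌉₊ - p * t / q := by
  set m := n / (p + q)
  set a := m - t
  have hkey : q * m + p * t < q * (p + q) * a := mul_add_mul_lt_mul_sub hq ht
  have hat : a + t = m := Nat.sub_add_cancel <| by
    by_contra! h
    simp [a, Nat.sub_eq_zero_of_le h.le] at hkey
  have hsum : p * a + (q * m + p * t) ≤ n := by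
    calc p * a + (q * m + p * t) = (p + q) * m := by rw [← hat]; ring
      _ ≤ n := Nat.mul_div_le n (p + q)
  set K := (n - p * a) / q
  have hmK : m + p * t / q ≤ K := by
    rw [Nat.le_div_iff_mul_le hq]
    calc (m + p * t / q) * q = q * m + p * t / q * q := by ring
      _ ≤ q * m + p * t := Nat.add_le_add_left (Nat.div_mul_le_self (p * t) q) _
      _ ≤ n - p * a := by omega
  have hma : m + p * t / q < (p + q) * a := by
    have := Nat.div_mul_le_self (p * t) q
    nlinarith
  have hcard := card_le_of_min_of_not_mul_add_mul_mem hq S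
    (fun y hy => (Finset.mem_Icc.mp (hS hy)).2) hfree hmin
  have hceil := Nat.ceil_pred_mul_div (d := p + q) (by omega) n
  push_cast at hceil
  rw [hceil]
  omega

theorem stmt13 (p q n t : ℕ) (hq : 1 ≤ q) (hpq : q ≤ p) (hp : 2 ≤ p)
    (ht : (t : ℚ) <
      (((p : ℚ) + q - 1) / ((p : ℚ) + q + (p : ℚ) / q)) * ((n / (p + q) : ℕ) : ℚ))
    (S : Finset ℕ) (hS : S ⊆ Finset.Icc 1 n)
    (hfree : ¬ ∃ x ∈ S, ∃ y ∈ S, ∃ z ∈ S, p * x + q * y = z)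
    (hmin : S.min = ((n / (p + q) - t : ℕ) : WithTop ℕ)) :
    S.card ≤ ⌈(((p : ℚ) + q - 1) * n) / ((p : ℚ) + q)⌉₊ - p * t / q :=
  stmt13_general p q n t hq ht S hS hfree hmin
end
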